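/- Given any point z ∈ P^1(F), the collection of all subsets of P^1(F) that arise as an orbit of some conjugate g G_{v0}(k) g^{-1} (g ∈ GL_2(F)) containing z forms a fundamental system of compact open neighborhoods of z. In particular, for z = 0 the discs B_z(0, |ϖ|^{k+n}) for n ≥ 1 are orbits of the groups G_{v_n}(k) = diag(1,ϖ^n) G_{v0}(k) diag(1,ϖ^n)^{-1}, and they form a neighborhood basis of 0. -/

import Mathlib

open Matrix Pointwise
open scoped OnePoint

noncomputable section

/-- `ϖ` is a uniformizer of the nonarchimedean field `F`. -/
def IsUniformizer (F : Type*) [NormedField F] (ϖ : F) : Prop :=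
  ϖ ≠ 0 ∧ ‖ϖ‖ < 1 ∧ ∀ x : F, ‖x‖ < 1 → ‖x‖ ≤ ‖ϖ‖

/-- The principal congruence subgroup `G_{v₀}(k)` of level `k`: matrices in `GL₂(𝒪)`
congruent to the identity modulo `ϖ^k` (entrywise, each entry of `g - 1` lies in `ϖ^k 𝒪`,
i.e. has norm at most `‖ϖ‖^k`). -/
def Gv0 (F : Type*) [NormedField F] (ϖ : F) (k : ℕ) : Set (GL (Fin 2) F) :=
  {g | ‖(g : Matrix (Fin 2) (Fin 2) F) 0 0 - 1‖ ≤ ‖ϖ‖ ^ k ∧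
       ‖(g : Matrix (Fin 2) (Fin 2) F) 0 1‖ ≤ ‖ϖ‖ ^ k ∧
       ‖(g : Matrix (Fin 2) (Fin 2) F) 1 0‖ ≤ ‖ϖ‖ ^ k ∧
       ‖(g : Matrix (Fin 2) (Fin 2) F) 1 1 - 1‖ ≤ ‖ϖ‖ ^ k}

/-- The diagonal matrix `diag(ϖ, 1)` as an element of `GL₂(F)`. -/
def dmat (F : Type*) [Field F] (ϖ : F) (h : ϖ ≠ 0) : GL (Fin 2) F :=
  Matrix.GeneralLinearGroup.mkOfDetNeZero !![ϖ, 0; 0, 1]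
    (by simpa [Matrix.det_fin_two_of] using h)

/-- `G_{v₁}(k) = diag(ϖ,1) · G_{v₀}(k) · diag(ϖ,1)⁻¹`. -/
def Gv1 (F : Type*) [NormedField F] (ϖ : F) (h : ϖ ≠ 0) (k : ℕ) : Set (GL (Fin 2) F) :=
  (fun g => dmat F ϖ h * g * (dmat F ϖ h)⁻¹) '' Gv0 F ϖ k

/-- The explicit set `H` of matrices `[[1+ϖ^k a, ϖ^k b],[ϖ^{k-1} c, 1+ϖ^k d]]`, `a,b,c,d ∈ 𝒪`;
this is the edge group `G_e(k)`. -/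
def Ge (F : Type*) [NormedField F] (ϖ : F) (k : ℕ) : Set (GL (Fin 2) F) :=
  {g | ‖(g : Matrix (Fin 2) (Fin 2) F) 0 0 - 1‖ ≤ ‖ϖ‖ ^ k ∧
       ‖(g : Matrix (Fin 2) (Fin 2) F) 0 1‖ ≤ ‖ϖ‖ ^ k ∧
       ‖(g : Matrix (Fin 2) (Fin 2) F) 1 0‖ ≤ ‖ϖ‖ ^ (k - 1) ∧
       ‖(g : Matrix (Fin 2) (Fin 2) F) 1 1 - 1‖ ≤ ‖ϖ‖ ^ k}

/-- The explicit description of `G_{v₁}(k)`: matrices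
`[[1+ϖ^k a, ϖ^{k+1} b],[ϖ^{k-1} c, 1+ϖ^k d]]` with `a,b,c,d ∈ 𝒪`. -/
def Gv1ex (F : Type*) [NormedField F] (ϖ : F) (k : ℕ) : Set (GL (Fin 2) F) :=
  {g | ‖(g : Matrix (Fin 2) (Fin 2) F) 0 0 - 1‖ ≤ ‖ϖ‖ ^ k ∧
       ‖(g : Matrix (Fin 2) (Fin 2) F) 0 1‖ ≤ ‖ϖ‖ ^ (k + 1) ∧
       ‖(g : Matrix (Fin 2) (Fin 2) F) 1 0‖ ≤ ‖ϖ‖ ^ (k - 1) ∧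
       ‖(g : Matrix (Fin 2) (Fin 2) F) 1 1 - 1‖ ≤ ‖ϖ‖ ^ k}

open scoped Classical in
/-- The right Möbius action of `g = [[a,b],[c,d]]` on `ℙ¹(F) = F ∪ {∞}` (here modelled as
`Option F`, with `none = ∞`): `z·g = (az+c)/(bz+d)`, `∞·g = a/b`, with value `∞` when the
denominator vanishes. -/
def moeb (F : Type*) [Field F] (g : Matrix (Fin 2) (Fin 2) F) : Option F → Option F
  | Option.some z => if g 0 1 * z + g 1 1 = 0 then Option.none
      else Option.some ((g 0 0 * z + g 1 0) / (g 0 1 * z + g 1 1))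
  | Option.none => if g 0 1 = 0 then Option.none else Option.some (g 0 0 / g 0 1)

/-- The orbit of `z ∈ ℙ¹(F)` under a set `S` of elements of `GL₂(F)` acting on the right by
Möbius transformations. -/
def orb (F : Type*) [Field F] (S : Set (GL (Fin 2) F)) (z : Option F) : Set (Option F) :=
  {w | ∃ g ∈ S, moeb F (g : Matrix (Fin 2) (Fin 2) F) z = w}

/-- `D` is an orbit of `S` on `ℙ¹(F)`. -/
def IsOrbit (F : Type*) [Field F] (S : Set (GL (Fin 2) F)) (D : Set (Option F)) : Prop :=
  ∃ z, D = orb F S z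

/-- The region `B_w(∞, |ϖ|) = {w ∈ ℙ¹(F) : |1/w| ≤ |ϖ|} = {|w| ≥ |ϖ|⁻¹} ∪ {∞}`. -/
def regionInfty (F : Type*) [NormedField F] (ϖ : F) : Set (Option F) :=
  {w | w = Option.none ∨ ∃ z : F, w = Option.some z ∧ ‖ϖ‖⁻¹ ≤ ‖z‖}

/-- The coordinate `1/w` on `ℙ¹(F)`, with `1/∞ = 0`. -/
def invc (F : Type*) [Field F] : Option F → F
  | Option.none => 0
  | Option.some z => z⁻¹

/-- The residue field of `F` has cardinality `q`: there are exactly `q` classes in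
`𝒪/(ϖ)`, witnessed by a set of representatives. -/
def ResidueCard (F : Type*) [NormedField F] (ϖ : F) (q : ℕ) : Prop :=
  ∃ s : Finset F, s.card = q ∧ (∀ x ∈ s, ‖x‖ ≤ 1) ∧
    ∀ x : F, ‖x‖ ≤ 1 → ∃! y, y ∈ s ∧ ‖x - y‖ ≤ ‖ϖ‖

/-- The conjugate `h S h⁻¹` of a set of matrices. -/
def conjSet (F : Type*) [Field F] (h : GL (Fin 2) F) (S : Set (GL (Fin 2) F)) :
    Set (GL (Fin 2) F) :=
  (fun g => h * g * h⁻¹) '' S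

/-- The matrix `g_α = [[1,0],[α,ϖ]]` as an element of `GL₂(F)`. -/
def galpha (F : Type*) [Field F] (ϖ α : F) (h : ϖ ≠ 0) : GL (Fin 2) F :=
  Matrix.GeneralLinearGroup.mkOfDetNeZero !![1, 0; α, ϖ]
    (by simpa [Matrix.det_fin_two_of] using h)

/-- The diagonal matrix `diag(1, ϖ^n)` as an element of `GL₂(F)`. -/
def dmatN (F : Type*) [Field F] (ϖ : F) (h : ϖ ≠ 0) (n : ℕ) : GL (Fin 2) F :=
  Matrix.GeneralLinearGroup.mkOfDetNeZero !![1, 0; 0, ϖ ^ n]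
    (by simpa [Matrix.det_fin_two_of] using pow_ne_zero n h)

open scoped Classical in
/-- The right Möbius action on `ℙ¹(F)`, modelled as the one-point compactification
`OnePoint F` of `F` (so that it carries its natural topology). -/
def moebP (F : Type*) [Field F] (g : Matrix (Fin 2) (Fin 2) F) : OnePoint F → OnePoint F
  | Option.some z => if g 0 1 * z + g 1 1 = 0 then (∞ : OnePoint F)
      else (((g 0 0 * z + g 1 0) / (g 0 1 * z + g 1 1) : F) : OnePoint F)
  | Option.none => if g 0 1 = 0 then (∞ : OnePoint F) else ((g 0 0 / g 0 1 : F) : OnePoint F)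

/-- The orbit of `z ∈ ℙ¹(F)` under a set `S ⊆ GL₂(F)` of Möbius transformations. -/
def orbP (F : Type*) [Field F] (S : Set (GL (Fin 2) F)) (z : OnePoint F) :
    Set (OnePoint F) :=
  {w | ∃ g ∈ S, moebP F (g : Matrix (Fin 2) (Fin 2) F) z = w}

/-- `D` is an orbit of `S` on `ℙ¹(F)`. -/
def IsOrbitP (F : Type*) [Field F] (S : Set (GL (Fin 2) F)) (D : Set (OnePoint F)) : Prop :=
  ∃ z, D = orbP F S z

/-!
Write the right Möbius action as `moebP g z = gᵀ • z`, with Mathlib's left action of `GL₂(F)` on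
`OnePoint F`. By the Bruhat decomposition `GL₂(F)` is generated by affine maps and `w : z ↦ 1/z`,
so it acts by homeomorphisms once `F` is proper, and an orbit of `g G g⁻¹` is a `GL₂(F)`-translate
of an orbit of `G = G_{v₀}(k)`. For `|y| ≤ 1` the `G`-orbit of `y` is the disc `B(y, |ϖ|^k)`
(the denominator `by + d` of a `g ∈ G` is a unit), and since `w` normalises `G` every other orbit
is the image under `w` of such a disc; discs are compact open in a proper ultrametric field.
Conjugating by `diag(1, ϖ^n)` shrinks the disc about `0` to radius `|ϖ|^(k+n)`, and the transitive
action of `GL₂(F)` carries this neighbourhood basis of `0` to every point.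
-/

open Matrix.GeneralLinearGroup Filter Topology Metric

namespace Matrix.GeneralLinearGroup
variable {n R : Type*} [Fintype n] [DecidableEq n] [CommRing R]

def transpose (g : GL n R) : GL n R :=
  ⟨(g : Matrix n n R)ᵀ, ((g⁻¹ : GL n R) : Matrix n n R)ᵀ,
    by rw [← Matrix.transpose_mul, Units.inv_mul, Matrix.transpose_one],
    by rw [← Matrix.transpose_mul, Units.mul_inv, Matrix.transpose_one]⟩

@[simp] lemma coe_transpose (g : GL n R) :
    (g.transpose : Matrix n n R) = (g : Matrix n n R)ᵀ := rfl

@[simp] lemma transpose_transpose (g : GL n R) : g.transpose.transpose = g :=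
  Units.ext (Matrix.transpose_transpose _)

@[simp] lemma transpose_mul (g h : GL n R) : (g * h).transpose = h.transpose * g.transpose :=
  Units.ext (Matrix.transpose_mul _ _)

@[simp] lemma transpose_inv (g : GL n R) : g⁻¹.transpose = g.transpose⁻¹ :=
  eq_inv_of_mul_eq_one_left <| by
    rw [← transpose_mul, mul_inv_cancel]; exact Units.ext Matrix.transpose_one

end Matrix.GeneralLinearGroup

def weyl (K : Type*) [Field K] : GL (Fin 2) K :=
  mkOfDetNeZero !![0, 1; 1, 0] (by simp [Matrix.det_fin_two_of])

section Field
variable {K : Type*} [Field K]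

lemma weyl_mul_weyl : weyl K * weyl K = 1 := by
  ext i j; fin_cases i <;> fin_cases j <;> simp [weyl]

lemma weyl_inv : (weyl K)⁻¹ = weyl K := inv_eq_of_mul_eq_one_right weyl_mul_weyl

lemma transpose_weyl : (weyl K).transpose = weyl K := by
  ext i j; fin_cases i <;> fin_cases j <;> rfl

lemma coe_weyl_mul_mul_weyl (g : GL (Fin 2) K) :
    ((weyl K * g * weyl K : GL (Fin 2) K) : Matrix (Fin 2) (Fin 2) K) =
      !![g 1 1, g 1 0; g 0 1, g 0 0] := by
  ext i j
  fin_cases i <;> fin_cases j <;>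
    simp [weyl, Matrix.mul_apply, Matrix.vecMul, dotProduct, Fin.sum_univ_two]

lemma exists_eq_mul_weyl_mul {g : GL (Fin 2) K} (hg : (g : Matrix (Fin 2) (Fin 2) K) 1 0 ≠ 0) :
    ∃ u v : GL (Fin 2) K, (u : Matrix (Fin 2) (Fin 2) K) 1 0 = 0 ∧
      (v : Matrix (Fin 2) (Fin 2) K) 1 0 = 0 ∧ g = u * weyl K * v := by
  have hdet := g.det_ne_zero
  rw [Matrix.det_fin_two] at hdet
  refine ⟨mkOfDetNeZero !![(g 0 1 * g 1 0 - g 0 0 * g 1 1) / g 1 0, g 0 0 / g 1 0; 0, 1]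
      (by rw [Matrix.det_fin_two_of, mul_one, mul_zero, sub_zero]
          exact div_ne_zero (by rwa [← neg_sub, neg_ne_zero]) hg),
    mkOfDetNeZero !![g 1 0, g 1 1; 0, 1] (by simp [Matrix.det_fin_two_of, hg]), rfl, rfl, ?_⟩
  ext i j
  fin_cases i <;> fin_cases j <;> simp [weyl, Matrix.mul_apply, Fin.sum_univ_two]
  all_goals field_simp
  ring

variable [DecidableEq K]

lemma moebP_eq_smul (g : GL (Fin 2) K) (z : OnePoint K) : moebP K g z = g.transpose • z := by
  cases z with
  | infty => simp only [moebP, OnePoint.smul_infty_eq_ite]; congr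
  | coe x => simp only [moebP, OnePoint.smul_some_eq_ite]; congr

lemma orbP_conjSet (h : GL (Fin 2) K) (S : Set (GL (Fin 2) K)) (z : OnePoint K) :
    orbP K (conjSet K h S) z = h.transpose⁻¹ • orbP K S (h.transpose • z) := by
  ext w
  simp only [orbP, conjSet, Set.mem_smul_set_iff_inv_smul_mem, inv_inv, Set.mem_image,
    Set.mem_ofPred_eq, exists_exists_and_eq_and, moebP_eq_smul,
    GeneralLinearGroup.transpose_mul, transpose_inv, mul_smul, inv_smul_eq_iff]

lemma exists_isOrbitP_conjSet_iff (S : Set (GL (Fin 2) K)) (D : Set (OnePoint K)) :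
    (∃ g, IsOrbitP K (conjSet K g S) D) ↔
      ∃ (t : GL (Fin 2) K) (y : OnePoint K), D = t • orbP K S y := by
  constructor
  · rintro ⟨g, z, rfl⟩
    exact ⟨_, _, orbP_conjSet g S z⟩
  · rintro ⟨t, y, rfl⟩
    refine ⟨t⁻¹.transpose, t • y, ?_⟩
    rw [orbP_conjSet, GeneralLinearGroup.transpose_transpose, inv_inv, inv_smul_smul]

lemma smul_eq_map_of_apply_one_zero {g : GL (Fin 2) K}
    (hg : (g : Matrix (Fin 2) (Fin 2) K) 1 0 = 0) :
    (g • · : OnePoint K → OnePoint K) = OnePoint.map fun x => (g 0 0 * x + g 0 1) / g 1 1 := by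
  have hd : (g : Matrix (Fin 2) (Fin 2) K) 1 1 ≠ 0 := by
    have := g.det_ne_zero
    rw [Matrix.det_fin_two, hg] at this
    exact right_ne_zero_of_mul (by simpa using this)
  funext z
  cases z with
  | infty => simp [OnePoint.smul_infty_eq_ite, hg]
  | coe x => simp [OnePoint.smul_some_eq_ite, hg, hd]

lemma smul_image_coe_of_apply_one_zero {g : GL (Fin 2) K}
    (hg : (g : Matrix (Fin 2) (Fin 2) K) 1 0 = 0) (s : Set K) :
    g • ((↑) '' s : Set (OnePoint K)) =
      ((↑) : K → OnePoint K) '' ((fun x => (g 0 0 * x + g 0 1) / g 1 1) '' s) := by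
  rw [← Set.image_smul, smul_eq_map_of_apply_one_zero hg, Set.image_image, Set.image_image]
  rfl

lemma weyl_smul_coe (x : K) :
    weyl K • (x : OnePoint K) = if x = 0 then ∞ else ((x⁻¹ : K) : OnePoint K) := by
  simp [weyl, OnePoint.smul_some_eq_ite]

lemma weyl_smul_infty : weyl K • (∞ : OnePoint K) = ((0 : K) : OnePoint K) := by
  simp [weyl, OnePoint.smul_infty_eq_ite]

lemma exists_smul_coe_zero_eq (z : OnePoint K) :
    ∃ t : GL (Fin 2) K, t • ((0 : K) : OnePoint K) = z := by
  cases z with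
  | infty => exact ⟨weyl K, by simp [weyl_smul_coe]⟩
  | coe x =>
    exact ⟨mkOfDetNeZero !![1, x; 0, 1] (by simp [Matrix.det_fin_two_of]),
      by simp [OnePoint.smul_some_eq_ite]⟩

end Field

lemma continuous_smul_of_apply_one_zero {K : Type*} [Field K] [DecidableEq K] [TopologicalSpace K]
    [IsTopologicalRing K] {g : GL (Fin 2) K} (hg : (g : Matrix (Fin 2) (Fin 2) K) 1 0 = 0) :
    Continuous (g • · : OnePoint K → OnePoint K) := by
  have ha : (g : Matrix (Fin 2) (Fin 2) K) 0 0 / g 1 1 ≠ 0 := by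
    have := g.det_ne_zero
    rw [Matrix.det_fin_two, hg, mul_zero, sub_zero] at this
    exact div_ne_zero (left_ne_zero_of_mul this) (right_ne_zero_of_mul this)
  let h : K ≃ₜ K := (Homeomorph.mulLeft₀ _ ha).trans (Homeomorph.addRight (g 0 1 / g 1 1))
  convert h.onePointCongr.continuous using 1
  rw [smul_eq_map_of_apply_one_zero hg]
  congr 1
  funext x
  simp only [h, Homeomorph.trans_apply, Homeomorph.coe_mulLeft₀, Homeomorph.coe_addRight]
  ring

section Proper
variable {K : Type*} [NontriviallyNormedField K] [ProperSpace K] [DecidableEq K]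

lemma continuous_weyl_smul : Continuous (weyl K • · : OnePoint K → OnePoint K) := by
  have hco : coclosedCompact K = Bornology.cobounded K := by
    rw [coclosedCompact_eq_cocompact, Metric.cobounded_eq_cocompact]
  rw [OnePoint.continuous_iff, weyl_smul_infty, hco]
  refine ⟨?_, continuous_iff_continuousAt.2 fun x => ?_⟩
  · refine (OnePoint.continuous_coe.tendsto 0 |>.comp tendsto_inv₀_cobounded).congr' ?_
    filter_upwards [Bornology.eventually_ne_cobounded 0] with x hx
    simp [weyl_smul_coe, hx]
  · rcases eq_or_ne x 0 with rfl | hx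
    · rw [← continuousWithinAt_compl_self, ContinuousWithinAt, weyl_smul_coe, if_pos rfl]
      refine ((OnePoint.tendsto_coe_infty.mono_left hco.ge).comp
        tendsto_inv₀_nhdsNE_zero).congr' ?_
      filter_upwards [self_mem_nhdsWithin] with y (hy : y ≠ 0)
      simp [weyl_smul_coe, hy]
    · refine (OnePoint.continuous_coe.continuousAt.comp (continuousAt_inv₀ hx)).congr ?_
      filter_upwards [eventually_ne_nhds hx] with y hy
      simp [weyl_smul_coe, hy]

instance : ContinuousConstSMul (GL (Fin 2) K) (OnePoint K) where
  continuous_const_smul g := by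
    by_cases hg : (g : Matrix (Fin 2) (Fin 2) K) 1 0 = 0
    · exact continuous_smul_of_apply_one_zero hg
    · obtain ⟨u, v, hu, hv, rfl⟩ := exists_eq_mul_weyl_mul hg
      simp only [mul_smul]
      exact (continuous_smul_of_apply_one_zero hu).comp
        (continuous_weyl_smul.comp (continuous_smul_of_apply_one_zero hv))

end Proper

lemma IsUltrametricDist.norm_add_le_of_le {E : Type*} [SeminormedAddGroup E] [IsUltrametricDist E]
    {x y : E} {r : ℝ} (hx : ‖x‖ ≤ r) (hy : ‖y‖ ≤ r) : ‖x + y‖ ≤ r :=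
  (norm_add_le_max x y).trans (max_le hx hy)

lemma norm_mul_le_of_le_of_norm_le_one {R : Type*} [NonUnitalSeminormedRing R] {x y : R} {r : ℝ}
    (hx : ‖x‖ ≤ r) (hy : ‖y‖ ≤ 1) : ‖x * y‖ ≤ r :=
  (norm_mul_le_of_le hx hy).trans_eq (mul_one r)

open IsUltrametricDist

section Ultrametric
variable {K : Type*} [NormedField K] [IsUltrametricDist K]

lemma norm_eq_one_of_norm_sub_one_lt_one {x : K} (hx : ‖x - 1‖ < 1) : ‖x‖ = 1 := by
  have := norm_add_eq_max_of_norm_ne_norm (x := 1) (y := x - 1) (by simpa using hx.ne')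
  rwa [add_sub_cancel, norm_one, max_eq_left (by simpa using hx.le)] at this

lemma orbP_Gv0_coe {ϖ : K} {k : ℕ} (hϖk : ‖ϖ‖ ^ k < 1) {y : K} (hy : ‖y‖ ≤ 1) :
    orbP K (Gv0 K ϖ k) y = (↑) '' closedBall y (‖ϖ‖ ^ k) := by
  ext w
  constructor
  · rintro ⟨g, ⟨ha, hb, hc, hd⟩, rfl⟩
    set M : Matrix (Fin 2) (Fin 2) K := (g : Matrix (Fin 2) (Fin 2) K)
    have hden : ‖M 0 1 * y + M 1 1‖ = 1 := by
      refine norm_eq_one_of_norm_sub_one_lt_one (lt_of_le_of_lt ?_ hϖk)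
      rw [add_sub_assoc]
      exact norm_add_le_of_le (norm_mul_le_of_le_of_norm_le_one hb hy) hd
    have hden0 : M 0 1 * y + M 1 1 ≠ 0 := norm_ne_zero_iff.1 (by rw [hden]; exact one_ne_zero)
    refine ⟨_, ?_, (if_neg hden0).symm⟩
    have hsub : (M 0 0 * y + M 1 0) / (M 0 1 * y + M 1 1) - y
        = ((M 0 0 - 1) * y + M 1 0 + (-(M 0 1 * y * y) + -((M 1 1 - 1) * y)))
          / (M 0 1 * y + M 1 1) := by
      rw [eq_div_iff hden0, sub_mul, div_mul_cancel₀ _ hden0]; ring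
    rw [mem_closedBall, dist_eq_norm, hsub, norm_div, hden, div_one]
    refine norm_add_le_of_le (norm_add_le_of_le (norm_mul_le_of_le_of_norm_le_one ha hy) hc)
      (norm_add_le_of_le ?_ ?_) <;> rw [norm_neg]
    · exact norm_mul_le_of_le_of_norm_le_one (norm_mul_le_of_le_of_norm_le_one hb hy) hy
    · exact norm_mul_le_of_le_of_norm_le_one hd hy
  · rintro ⟨w, hw, rfl⟩
    rw [mem_closedBall, dist_eq_norm] at hw
    refine ⟨mkOfDetNeZero !![1, 0; w - y, 1] (by simp [Matrix.det_fin_two_of]),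
      ⟨?_, ?_, ?_, ?_⟩, ?_⟩
    all_goals simp [moebP, hw, pow_nonneg (norm_nonneg ϖ) k]

end Ultrametric

section Normed
variable {K : Type*} [NormedField K]

lemma weyl_mul_mul_weyl_mem_Gv0 {ϖ : K} {k : ℕ} {g : GL (Fin 2) K} (hg : g ∈ Gv0 K ϖ k) :
    weyl K * g * weyl K ∈ Gv0 K ϖ k := by
  obtain ⟨ha, hb, hc, hd⟩ := hg
  simp only [Gv0, Set.mem_ofPred_eq, coe_weyl_mul_mul_weyl]
  simp [ha, hb, hc, hd]

lemma conjSet_weyl_Gv0 (ϖ : K) (k : ℕ) : conjSet K (weyl K) (Gv0 K ϖ k) = Gv0 K ϖ k := by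
  rw [conjSet, weyl_inv]
  refine subset_antisymm (Set.image_subset_iff.2 fun g => weyl_mul_mul_weyl_mem_Gv0)
    fun g hg => ⟨_, weyl_mul_mul_weyl_mem_Gv0 hg, ?_⟩
  simp only [← mul_assoc, weyl_mul_weyl, one_mul]
  rw [mul_assoc, weyl_mul_weyl, mul_one]

variable [DecidableEq K]

lemma orbP_Gv0_weyl_smul (ϖ : K) (k : ℕ) (z : OnePoint K) :
    orbP K (Gv0 K ϖ k) (weyl K • z) = weyl K • orbP K (Gv0 K ϖ k) z := by
  conv_lhs => rw [← conjSet_weyl_Gv0]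
  rw [orbP_conjSet, transpose_weyl, weyl_inv, smul_smul, weyl_mul_weyl, one_smul]

variable [IsUltrametricDist K]

lemma exists_orbP_Gv0_eq_smul_image_closedBall {ϖ : K} {k : ℕ} (hϖk : ‖ϖ‖ ^ k < 1)
    (z : OnePoint K) :
    ∃ (t : GL (Fin 2) K) (y : K),
      orbP K (Gv0 K ϖ k) z = t • (↑) '' closedBall y (‖ϖ‖ ^ k) := by
  have hweyl : ∀ y : K, ‖y‖ ≤ 1 → orbP K (Gv0 K ϖ k) (weyl K • (y : OnePoint K)) =
      weyl K • (↑) '' closedBall y (‖ϖ‖ ^ k) := fun y hy => by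
    rw [orbP_Gv0_weyl_smul, orbP_Gv0_coe hϖk hy]
  cases z with
  | infty => exact ⟨weyl K, 0, by simpa [weyl_smul_coe] using hweyl 0 (by simp)⟩
  | coe x =>
    rcases le_or_gt ‖x‖ 1 with hx | hx
    · exact ⟨1, x, by rw [one_smul, orbP_Gv0_coe hϖk hx]⟩
    · have hx0 : x ≠ 0 := norm_pos_iff.1 (one_pos.trans hx)
      refine ⟨weyl K, x⁻¹, ?_⟩
      rw [← hweyl _ (by rw [norm_inv]; exact inv_le_one_of_one_le₀ hx.le), weyl_smul_coe,
        if_neg (inv_ne_zero hx0), inv_inv]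

lemma orbP_conjSet_dmatN_zero {ϖ : K} (hϖ : ϖ ≠ 0) {k : ℕ} (hϖk : ‖ϖ‖ ^ k < 1)
    (n : ℕ) :
    orbP K (conjSet K (dmatN K ϖ hϖ n) (Gv0 K ϖ k)) ((0 : K) : OnePoint K) =
      (↑) '' closedBall (0 : K) (‖ϖ‖ ^ (k + n)) := by
  set d := dmatN K ϖ hϖ n
  have hd : (d : Matrix (Fin 2) (Fin 2) K) = !![1, 0; 0, ϖ ^ n] := rfl
  have hdT : d.transpose = d :=
    Units.ext (by rw [coe_transpose, hd]; ext i j; fin_cases i <;> fin_cases j <;> rfl)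
  have hd0 : d • ((0 : K) : OnePoint K) = ((0 : K) : OnePoint K) := by
    simp [OnePoint.smul_some_eq_ite, hd, hϖ]
  have hϖn : 0 < ‖ϖ‖ ^ n := pow_pos (norm_pos_iff.2 hϖ) n
  rw [orbP_conjSet, hdT, hd0, orbP_Gv0_coe hϖk (norm_zero.trans_le zero_le_one), inv_smul_eq_iff,
    smul_image_coe_of_apply_one_zero (by rw [hd]; rfl)]
  congr 1
  ext x
  simp only [hd, Matrix.of_apply, Matrix.cons_val', Matrix.cons_val_zero, Matrix.cons_val_one,
    Matrix.empty_val', Matrix.cons_val_fin_one, one_mul, add_zero, Set.mem_image,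
    mem_closedBall_zero_iff]
  constructor
  · intro hx
    refine ⟨x * ϖ ^ n, ?_, by field_simp⟩
    rw [norm_mul, norm_pow, pow_add]
    exact mul_le_mul_of_nonneg_right hx hϖn.le
  · rintro ⟨z, hz, rfl⟩
    rwa [norm_div, norm_pow, div_le_iff₀ hϖn, ← pow_add]

end Normed

lemma OnePoint.hasBasis_nhds_coe_closedBall_pow {X : Type*} [PseudoMetricSpace X] (x : X) {r : ℝ}
    (h0 : 0 < r) (h1 : r < 1) :
    (𝓝 (x : OnePoint X)).HasBasis (fun _ => True)
      fun n : ℕ => ((↑) : X → OnePoint X) '' closedBall x (r ^ n) := by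
  rw [OnePoint.nhds_coe_eq]
  exact (nhds_basis_closedBall_pow h0 h1).map _

lemma isCompact_isOpen_smul_image_coe_closedBall {K : Type*} [NontriviallyNormedField K]
    [ProperSpace K] [IsUltrametricDist K] [DecidableEq K] (t : GL (Fin 2) K) (y : K) {r : ℝ}
    (hr : 0 < r) :
    IsCompact (t • ((↑) '' closedBall y r : Set (OnePoint K))) ∧
      IsOpen (t • ((↑) '' closedBall y r : Set (OnePoint K))) :=
  ⟨((isCompact_closedBall y r).image OnePoint.continuous_coe).smul t,
    (OnePoint.isOpen_image_coe.2 (IsUltrametricDist.isOpen_closedBall y hr.ne')).smul t⟩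

theorem statement16 (p : ℕ) [Fact p.Prime] (F : Type*) [NontriviallyNormedField F]
    [IsUltrametricDist F] [NormedAlgebra ℚ_[p] F] [FiniteDimensional ℚ_[p] F]
    (ϖ : F) (hϖ : IsUniformizer F ϖ) (k : ℕ) (hk : 1 ≤ k) :
    (∀ z : OnePoint F,
      (∀ D : Set (OnePoint F),
        (∃ g : GL (Fin 2) F, IsOrbitP F (conjSet F g (Gv0 F ϖ k)) D) → z ∈ D →
        IsCompact D ∧ IsOpen D) ∧
      (∀ U ∈ nhds z, ∃ D : Set (OnePoint F),
        (∃ g : GL (Fin 2) F, IsOrbitP F (conjSet F g (Gv0 F ϖ k)) D) ∧ z ∈ D ∧ D ⊆ U)) ∧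
    (∀ n : ℕ, 1 ≤ n →
      IsOrbitP F (conjSet F (dmatN F ϖ hϖ.1 n) (Gv0 F ϖ k))
        ((fun x : F => (x : OnePoint F)) '' {z : F | ‖z‖ ≤ ‖ϖ‖ ^ (k + n)})) ∧
    (∀ U ∈ nhds ((0 : F) : OnePoint F), ∃ n : ℕ, 1 ≤ n ∧
      (fun x : F => (x : OnePoint F)) '' {z : F | ‖z‖ ≤ ‖ϖ‖ ^ (k + n)} ⊆ U) := by
  classical
  have : ProperSpace F := FiniteDimensional.proper ℚ_[p] F
  have hϖ0 : 0 < ‖ϖ‖ := norm_pos_iff.2 hϖ.1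
  have hϖk : ‖ϖ‖ ^ k < 1 := pow_lt_one₀ hϖ0.le hϖ.2.1 (by omega)
  have hball : ∀ r : ℝ, {z : F | ‖z‖ ≤ r} = closedBall 0 r := fun r => by ext; simp
  simp only [hball]
  have hdisc : ∀ n, IsOrbitP F (conjSet F (dmatN F ϖ hϖ.1 n) (Gv0 F ϖ k))
      (((↑) : F → OnePoint F) '' closedBall 0 (‖ϖ‖ ^ (k + n))) := fun n =>
    ⟨_, (orbP_conjSet_dmatN_zero hϖ.1 hϖk n).symm⟩
  have hsmall : ∀ U ∈ 𝓝 ((0 : F) : OnePoint F), ∃ n, 1 ≤ n ∧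
      ((↑) : F → OnePoint F) '' closedBall 0 (‖ϖ‖ ^ (k + n)) ⊆ U := fun U hU => by
    obtain ⟨m, -, hm⟩ := (OnePoint.hasBasis_nhds_coe_closedBall_pow 0 hϖ0 hϖ.2.1).mem_iff.1 hU
    refine ⟨m + 1, by omega, (Set.image_mono (closedBall_subset_closedBall ?_)).trans hm⟩
    exact pow_le_pow_of_le_one hϖ0.le hϖ.2.1.le (by omega)
  refine ⟨fun z => ⟨?_, fun U hU => ?_⟩, fun n _ => hdisc n, hsmall⟩
  · rintro D hD -
    obtain ⟨t, y, rfl⟩ := (exists_isOrbitP_conjSet_iff _ D).1 hD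
    obtain ⟨t', y', h⟩ := exists_orbP_Gv0_eq_smul_image_closedBall hϖk y
    rw [h, smul_smul]
    exact isCompact_isOpen_smul_image_coe_closedBall _ _ (pow_pos hϖ0 k)
  · obtain ⟨t, rfl⟩ := exists_smul_coe_zero_eq z
    obtain ⟨n, -, hn⟩ := hsmall _ (by simpa using (smul_mem_nhds_smul_iff t⁻¹).2 hU)
    obtain ⟨t', y, h⟩ := (exists_isOrbitP_conjSet_iff _ _).1 ⟨_, hdisc n⟩
    refine ⟨t • ((↑) '' closedBall (0 : F) (‖ϖ‖ ^ (k + n))),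
      (exists_isOrbitP_conjSet_iff _ _).2 ⟨t * t', y, by rw [h, smul_smul]⟩,
      Set.smul_mem_smul_set ⟨0, mem_closedBall_self (pow_pos hϖ0 _).le, rfl⟩,
      Set.smul_set_subset_iff_subset_inv_smul_set.2 hn⟩
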